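/- Let M = SM(U) be a loopless and coloopless Schubert matroid on [n] of rank r, with n ≥ 2. Then the β-invariant β(M) equals the number of admissible Delannoy paths associated to SM(U) having no diagonal steps. -/

import Mathlib

open scoped Classical

namespace GPoly

/-- A step of a Delannoy path: east `+(1,0)`, north `+(0,1)` or diagonal `+(1,1)`. -/
inductive DStep : Type
  | east : DStep
  | north : DStep
  | diag : DStep
  deriving DecidableEq

/-- Horizontal displacement of a step. -/
def DStep.dx : DStep → ℕ
  | .east => 1
  | .north => 0
  | .diag => 1

/-- Vertical displacement of a step. -/
def DStep.dy : DStep → ℕ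
  | .east => 0
  | .north => 1
  | .diag => 1

/-- Position reached after the first `k` steps of `P`, starting at the point `s`. -/
def pathPos (s : ℕ × ℕ) (P : List DStep) (k : ℕ) : ℕ × ℕ :=
  (s.1 + ((P.take k).map DStep.dx).sum, s.2 + ((P.take k).map DStep.dy).sum)

/-- The Gale order: `U ≤ B` iff the increasing enumerations satisfy `u_ℓ ≤ b_ℓ`. -/
def galeLe {α : Type*} [LinearOrder α] (U B : Finset α) : Prop :=
  List.Forall₂ (· ≤ ·) (U.sort (· ≤ ·)) (B.sort (· ≤ ·))

/-- Bases of the Schubert matroid `SM(U)` of rank `r` on `[n] = {1, …, n}`: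
all `r`-subsets `B` of `[n]` with `U ≤ B` in the Gale order. -/
noncomputable def schubertBases (n r : ℕ) (U : Finset ℕ) : Finset (Finset ℕ) :=
  (Finset.Icc 1 n).powerset.filter fun B => B.card = r ∧ galeLe U B

/-- The point `p` lies weakly below the lattice path `path(U)`. -/
def belowPath (U : Finset ℕ) (p : ℕ × ℕ) : Prop :=
  p.2 ≤ (U ∩ Finset.Icc 1 (p.1 + p.2)).card

/-- `path(U)` traverses the vertical unit segment from `(x, y)` to `(x, y+1)`
(by its north step number `x + y + 1`). -/
def uVertSeg (U : Finset ℕ) (x y : ℕ) : Prop :=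
  x + y + 1 ∈ U ∧ (U ∩ Finset.Icc 1 (x + y + 1)).card = y + 1

/-- A Delannoy path associated to `SM(U)`: starts at `(1,1)`, ends at `(n-r, r)` and
stays weakly below `path(U)`. -/
def IsDelannoy (n r : ℕ) (U : Finset ℕ) (P : List DStep) : Prop :=
  pathPos (1, 1) P P.length = (n - r, r) ∧
    ∀ k ≤ P.length, belowPath U (pathPos (1, 1) P k)

/-- Admissible Delannoy path associated to `SM(U)`. -/
def IsAdmissible (n r : ℕ) (U : Finset ℕ) (P : List DStep) : Prop :=
  IsDelannoy n r U P ∧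
    ∀ (k : ℕ) (h : k < P.length),
      (P.get ⟨k, h⟩ = DStep.north →
        pathPos (1, 1) P (k + 1) = (n - r, r) ∨
          ¬ uVertSeg U (pathPos (1, 1) P k).1 (pathPos (1, 1) P k).2) ∧
      (P.get ⟨k, h⟩ = DStep.diag →
        belowPath U ((pathPos (1, 1) P k).1, (pathPos (1, 1) P k).2 + 1) ∧
          ¬ uVertSeg U (pathPos (1, 1) P k).1 (pathPos (1, 1) P k).2)

/-- Number of diagonal steps of a path. -/
def diagCount (P : List DStep) : ℕ := (P.filter (· = DStep.diag)).length

/-- The set of indices (0-based) of the diagonal steps of `P`. -/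
def diagIndices (P : List DStep) : Finset ℕ :=
  (Finset.range P.length).filter fun k => P.getD k DStep.east = DStep.diag

/-- Replace a diagonal step by a north step followed by an east step. -/
def expandNE : DStep → List DStep
  | DStep.diag => [DStep.north, DStep.east]
  | s => [s]

/-- Replace a diagonal step by an east step followed by a north step. -/
def expandEN : DStep → List DStep
  | DStep.diag => [DStep.east, DStep.north]
  | s => [s]

/-- The full lattice path of `B_P`: an east step, a north step, then the steps of `P`
with each diagonal step replaced by a north step immediately followed by an east step. -/
def fullPath (P : List DStep) : List DStep :=
  DStep.east :: DStep.north :: (P.map expandNE).flatten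

/-- The subset of `[n]` whose `path` is the given (diagonal-free) list of steps:
the set of (1-based) positions of the north steps. -/
def northSet (L : List DStep) : Finset ℕ :=
  ((Finset.range L.length).filter fun k => L.getD k DStep.east = DStep.north).image (· + 1)

/-- The basis `B_P` associated to a Delannoy path `P`. -/
def delannoyBasis (P : List DStep) : Finset ℕ := northSet (fullPath P)

/-! ### Matroid notions for a family of bases -/

/-- `S` is independent for the basis family `ℬ`: it is contained in some basis. -/
def famIndep (ℬ : Finset (Finset ℕ)) (S : Finset ℕ) : Prop := ∃ B ∈ ℬ, S ⊆ B

/-- `C` is a circuit for the basis family `ℬ`: a minimal dependent set. -/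
def famCircuit (ℬ : Finset (Finset ℕ)) (C : Finset ℕ) : Prop :=
  ¬ famIndep ℬ C ∧ ∀ C' ⊂ C, famIndep ℬ C'

/-- The dual basis family on the ground set `E`: complements of bases. -/
noncomputable def famDual (E : Finset ℕ) (ℬ : Finset (Finset ℕ)) : Finset (Finset ℕ) :=
  ℬ.image fun B => E \ B

/-- `e ∉ B` is externally active: `e` is the smallest element of the unique circuit
contained in `B ∪ {e}`. -/
def ExtActive (E : Finset ℕ) (ℬ : Finset (Finset ℕ)) (B : Finset ℕ) (e : ℕ) : Prop :=
  e ∈ E ∧ e ∉ B ∧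
    ∃ C, C ⊆ insert e B ∧ famCircuit ℬ C ∧ e ∈ C ∧ ∀ x ∈ C, e ≤ x

/-- `i ∈ B` is internally active: `i` is the smallest element of the unique cocircuit
contained in `(E ∖ B) ∪ {i}`. -/
def IntActive (E : Finset ℕ) (ℬ : Finset (Finset ℕ)) (B : Finset ℕ) (i : ℕ) : Prop :=
  i ∈ B ∧
    ∃ C, C ⊆ insert i (E \ B) ∧ famCircuit (famDual E ℬ) C ∧ i ∈ C ∧ ∀ x ∈ C, i ≤ x

/-- External activity `e(B)`. -/
noncomputable def extAct (E : Finset ℕ) (ℬ : Finset (Finset ℕ)) (B : Finset ℕ) : ℕ :=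
  (E.filter (ExtActive E ℬ B)).card

/-- Internal activity `i(B)`. -/
noncomputable def intAct (E : Finset ℕ) (ℬ : Finset (Finset ℕ)) (B : Finset ℕ) : ℕ :=
  (E.filter (IntActive E ℬ B)).card

/-- The statistic `α(B)`: the number of `i ∈ B` such that `B' = (B ∖ {i}) ∪ {i+1}`
is a basis with `e(B') = e(B)` and `i(B') = i(B)`. -/
noncomputable def alphaStat (E : Finset ℕ) (ℬ : Finset (Finset ℕ)) (B : Finset ℕ) : ℕ :=
  (B.filter fun i =>
    insert (i + 1) (B.erase i) ∈ ℬ ∧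
      extAct E ℬ (insert (i + 1) (B.erase i)) = extAct E ℬ B ∧
      intAct E ℬ (insert (i + 1) (B.erase i)) = intAct E ℬ B).card

/-- The rank function determined by a family of bases. -/
noncomputable def famRank (ℬ : Finset (Finset ℕ)) (A : Finset ℕ) : ℕ :=
  ℬ.sup fun B => (A ∩ B).card

/-- The β-invariant: `β(M) = (−1)^{rk(E)} Σ_{A ⊆ E} (−1)^{|A|} rk(A)`. -/
noncomputable def betaInv (E : Finset ℕ) (ℬ : Finset (Finset ℕ)) : ℤ :=
  (-1) ^ famRank ℬ E * ∑ A ∈ E.powerset, (-1) ^ A.card * (famRank ℬ A : ℤ)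

/-- `ℬ` is the collection of bases of a matroid with ground set `E`:
it is a nonempty family of subsets of `E` satisfying the basis exchange property. -/
def IsBasisFamily (E : Finset ℕ) (ℬ : Finset (Finset ℕ)) : Prop :=
  ℬ.Nonempty ∧ (∀ B ∈ ℬ, B ⊆ E) ∧
    ∀ B₁ ∈ ℬ, ∀ B₂ ∈ ℬ, ∀ x ∈ B₁ \ B₂, ∃ y ∈ B₂ \ B₁, insert y (B₁.erase x) ∈ ℬ

/-- Two elements lie in a common component: they are equal or in a common circuit. -/
def connRel (ℬ : Finset (Finset ℕ)) (e f : ℕ) : Prop :=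
  e = f ∨ ∃ C, famCircuit ℬ C ∧ e ∈ C ∧ f ∈ C

/-- The number of connected components of the matroid with bases `ℬ` on `E`. -/
noncomputable def numComponents (E : Finset ℕ) (ℬ : Finset (Finset ℕ)) : ℕ :=
  Set.ncard {S : Set ℕ | ∃ e ∈ E, S = {f | f ∈ E ∧ Relation.EqvGen (connRel ℬ) e f}}

/-- The matroid with bases `ℬ` on ground set `E` is connected. -/
def IsConnectedFam (E : Finset ℕ) (ℬ : Finset (Finset ℕ)) : Prop :=
  E.Nonempty ∧ ∀ e ∈ E, ∀ f ∈ E, Relation.EqvGen (connRel ℬ) e f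

/-- Series-parallel matroid: isomorphic to `U_{0,1}` or `U_{1,1}`
(a single loop or a single coloop), or connected with β-invariant `1`. -/
def IsSeriesParallel (E : Finset ℕ) (ℬ : Finset (Finset ℕ)) : Prop :=
  (E.card = 1 ∧ (ℬ = {∅} ∨ ℬ = {E})) ∨ (IsConnectedFam E ℬ ∧ betaInv E ℬ = 1)

/-- The bases of the restriction of the matroid with bases `ℬ` to the set `F`:
the maximal intersections of bases with `F`. -/
noncomputable def famRestrict (ℬ : Finset (Finset ℕ)) (F : Finset ℕ) : Finset (Finset ℕ) :=
  (ℬ.image (· ∩ F)).filter fun S => ∀ T ∈ ℬ.image (· ∩ F), S ⊆ T → S = T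

/-- The matroid with bases `ℬ` on `E` is a direct sum of series-parallel matroids. -/
def IsDirectSumOfSeriesParallel (E : Finset ℕ) (ℬ : Finset (Finset ℕ)) : Prop :=
  ∃ parts : Finset (Finset ℕ),
    (↑parts : Set (Finset ℕ)).PairwiseDisjoint id ∧
    parts.sup id = E ∧
    (∀ S ∈ parts, IsSeriesParallel S (famRestrict ℬ S)) ∧
    ℬ = E.powerset.filter fun B => ∀ S ∈ parts, B ∩ S ∈ famRestrict ℬ S

/-! ### Base polytopes -/

/-- The indicator vector of `B ⊆ E`, as a point of `ℝ^E`. -/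
noncomputable def basisVector (E : Finset ℕ) (B : Finset ℕ) : ↑E → ℝ :=
  fun e => if (e : ℕ) ∈ B then 1 else 0

/-- The base polytope of the matroid with bases `ℬ` on `E`:
the convex hull in `ℝ^E` of the indicator vectors of the bases. -/
noncomputable def basePolytope (E : Finset ℕ) (ℬ : Finset (Finset ℕ)) : Set (↑E → ℝ) :=
  convexHull ℝ (basisVector E '' (↑ℬ : Set (Finset ℕ)))

/-- The indicator function `ℝ^E → ℤ` of the base polytope. -/
noncomputable def polyInd (E : Finset ℕ) (ℬ : Finset (Finset ℕ)) : (↑E → ℝ) → ℤ :=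
  fun x => if x ∈ basePolytope E ℬ then 1 else 0

/-- The indicator function `ℝ^E → ℤ` of the relative interior of the base polytope. -/
noncomputable def relintInd (E : Finset ℕ) (ℬ : Finset (Finset ℕ)) : (↑E → ℝ) → ℤ :=
  fun x => if x ∈ intrinsicInterior ℝ (basePolytope E ℬ) then 1 else 0

/-! ### Cyclic flats and the cyclic chain lattice -/

/-- `F` is a flat of the matroid with bases `ℬ` on `E`. -/
def IsFlat (E : Finset ℕ) (ℬ : Finset (Finset ℕ)) (F : Finset ℕ) : Prop :=
  F ⊆ E ∧ ∀ e ∈ E, famRank ℬ (insert e F) = famRank ℬ F → e ∈ F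

/-- `F` is a cyclic flat: a flat whose restriction has no coloops. -/
def IsCyclicFlat (E : Finset ℕ) (ℬ : Finset (Finset ℕ)) (F : Finset ℕ) : Prop :=
  IsFlat E ℬ F ∧ ∀ e ∈ F, ¬ (∀ S ∈ famRestrict ℬ F, e ∈ S)

/-- The set of cyclic flats. -/
noncomputable def cyclicFlats (E : Finset ℕ) (ℬ : Finset (Finset ℕ)) : Finset (Finset ℕ) :=
  E.powerset.filter (IsCyclicFlat E ℬ)

/-- A chain of cyclic flats containing the minimum and maximum of the lattice of
cyclic flats; these are the elements (other than the top `1̂`) of the cyclic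
chain lattice. -/
def IsCyclicChain (E : Finset ℕ) (ℬ : Finset (Finset ℕ)) (C : Finset (Finset ℕ)) : Prop :=
  ↑C ⊆ (cyclicFlats E ℬ : Set (Finset ℕ)) ∧ IsChain (· ⊆ ·) (↑C : Set (Finset ℕ)) ∧
    (∃ F ∈ C, ∀ G ∈ cyclicFlats E ℬ, F ⊆ G) ∧
    (∃ F ∈ C, ∀ G ∈ cyclicFlats E ℬ, G ⊆ F)

/-- The set of chains of cyclic flats containing the minimum and the maximum. -/
noncomputable def cyclicChains (E : Finset ℕ) (ℬ : Finset (Finset ℕ)) :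
    Finset (Finset (Finset ℕ)) :=
  (cyclicFlats E ℬ).powerset.filter (IsCyclicChain E ℬ)

/-- The rank function `A ↦ min_{Z ∈ C} (rk_M(Z) + |A ∖ Z|)` associated to a chain `C`. -/
noncomputable def chainRank (ℬ : Finset (Finset ℕ)) (C : Finset (Finset ℕ))
    (A : Finset ℕ) : ℕ :=
  if h : C.Nonempty then C.inf' h fun Z => famRank ℬ Z + (A \ Z).card else A.card

/-- The bases of the matroid on `E` with rank function `rk`:
the subsets `B ⊆ E` with `rk B = |B| = rk E`. -/
noncomputable def basesOfRank (E : Finset ℕ) (rk : Finset ℕ → ℕ) : Finset (Finset ℕ) :=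
  E.powerset.filter fun B => rk B = B.card ∧ rk B = rk E

/-- The bases of the Schubert matroid `S_C` associated to a chain `C` of cyclic flats. -/
noncomputable def chainSchubert (E : Finset ℕ) (ℬ : Finset (Finset ℕ))
    (C : Finset (Finset ℕ)) : Finset (Finset ℕ) :=
  basesOfRank E (chainRank ℬ C)

/-- The point reached by `path(S)` after `k` steps. -/
def pathPoint (S : Finset ℕ) (k : ℕ) : ℕ × ℕ :=
  (k - (S ∩ Finset.Icc 1 k).card, (S ∩ Finset.Icc 1 k).card)

/-!
Both sides satisfy the same deletion–contraction recursion in the largest element. Loopless and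
coloopless means `1 ∈ U` and `n ∉ U`, so `n` is neither a loop nor a coloop of `M = SM(U)` and
`β(M) = β(M ∖ n) + β(M / n)`, where `M ∖ n` is `SM(U)` on `[n - 1]` and `M / n` is
`SM(U ∖ {max U})` on `[n - 1]`; if `n - 1 ∈ U` it is a coloop of `M ∖ n`, and then `β(M ∖ n) = 0`.
On the other side, a diagonal-free admissible path ends with an east or a north step. Removing a
final east step gives the admissible paths of `M ∖ n` (there are none ending with an east step when
`n - 1 ∈ U`), removing a final north step those of `M / n`. Induction on `n` from `SM({1})` on `[2]`
concludes.
-/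

open Finset

lemma zero_notMem_of_subset_Icc {S : Finset ℕ} {m : ℕ} (h : S ⊆ Icc 1 m) : 0 ∉ S :=
  fun h0 => by simpa using h h0

lemma subset_Icc_iff_of_notMem {B : Finset ℕ} {n : ℕ} (hB : n + 1 ∉ B) :
    B ⊆ Icc 1 (n + 1) ↔ B ⊆ Icc 1 n := by
  refine ⟨fun h x hx => ?_, fun h => h.trans (Icc_subset_Icc_right n.le_succ)⟩
  have := mem_Icc.mp (h hx); have : x ≠ n + 1 := fun h => hB (h ▸ hx)
  exact mem_Icc.mpr (by omega)

/-- The height of `path(S)` after `k` steps. -/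
def prefixCard (S : Finset ℕ) (k : ℕ) : ℕ := (S ∩ Icc 1 k).card

section PrefixCard

variable {S : Finset ℕ} {a k m : ℕ}

lemma prefixCard_le_card : prefixCard S k ≤ S.card :=
  card_le_card inter_subset_left

lemma prefixCard_eq_card (h : S ⊆ Icc 1 k) : prefixCard S k = S.card := by
  rw [prefixCard, inter_eq_left.mpr h]

lemma prefixCard_lt_card (ha : a ∈ S) (hk : k < a) : prefixCard S k < S.card :=
  card_lt_card ⟨inter_subset_left, fun h => by simpa [hk.not_ge] using (mem_inter.mp (h ha)).2⟩

lemma prefixCard_insert (ha : a ∉ S) (ha1 : 1 ≤ a) :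
    prefixCard (insert a S) k = prefixCard S k + if a ≤ k then 1 else 0 := by
  unfold prefixCard
  split_ifs with hak
  · rw [insert_inter_of_mem (mem_Icc.mpr ⟨ha1, hak⟩), card_insert_of_notMem (by simp [ha])]
  · rw [insert_inter_of_notMem (by simp [hak]), add_zero]

lemma prefixCard_erase (ha : a ∈ S) (ha1 : 1 ≤ a) :
    prefixCard S k = prefixCard (S.erase a) k + if a ≤ k then 1 else 0 := by
  rw [← prefixCard_insert (notMem_erase a S) ha1, insert_erase ha]

lemma prefixCard_one : prefixCard S 1 = if 1 ∈ S then 1 else 0 := by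
  unfold prefixCard
  split_ifs with h <;> simp [h, Icc_self, inter_singleton_of_notMem, inter_singleton_of_mem]

lemma prefixCard_add_card_inter_Ioc (h : S ⊆ Icc 1 m) :
    prefixCard S k + (S ∩ Ioc k m).card = S.card := by
  rw [prefixCard, ← card_union_of_disjoint]
  · congr 1
    ext x
    have := @h x
    simp only [mem_union, mem_inter, mem_Icc, mem_Ioc] at this ⊢
    constructor
    · rintro (⟨hx, -⟩ | ⟨hx, -⟩) <;> exact hx
    · intro hx; have := this hx; by_cases hxk : x ≤ k <;> simp [hx, hxk] <;> omega
  · exact disjoint_left.mpr fun x hx hx' => by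
      simp only [mem_inter, mem_Icc, mem_Ioc] at hx hx'; omega

lemma prefixCard_le_prefixCard_of_Ioc_subset {T : Finset ℕ} (hS : S ⊆ Icc 1 m)
    (hT : T ⊆ Icc 1 m) (hcard : S.card = T.card) (hk : Ioc k m ⊆ S) :
    prefixCard S k ≤ prefixCard T k := by
  have hS' := prefixCard_add_card_inter_Ioc (k := k) hS
  have hT' := prefixCard_add_card_inter_Ioc (k := k) hT
  rw [inter_eq_right.mpr hk] at hS'
  have := card_le_card (inter_subset_right : T ∩ Ioc k m ⊆ Ioc k m)
  omega

end PrefixCard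

section ErasedMax

variable {U : Finset ℕ} (h : U.Nonempty) {k : ℕ}

lemma subset_Icc_max' (hU : 0 ∉ U) : U ⊆ Icc 1 (U.max' h) := fun x hx =>
  mem_Icc.mpr ⟨Nat.one_le_iff_ne_zero.mpr (by rintro rfl; exact hU hx), U.le_max' x hx⟩

lemma notMem_erase_max' {n : ℕ} (hU : U ⊆ Icc 1 n) : n ∉ U.erase (U.max' h) := fun hn =>
  ne_of_mem_erase hn
    (le_antisymm (U.le_max' _ (mem_of_mem_erase hn)) (mem_Icc.mp (hU (U.max'_mem h))).2)

lemma prefixCard_of_max'_le (hU : 0 ∉ U) (hk : U.max' h ≤ k) : prefixCard U k = U.card :=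
  prefixCard_eq_card ((subset_Icc_max' h hU).trans (Icc_subset_Icc_right hk))

lemma prefixCard_erase_max'_add_one (hU : 0 ∉ U) (hk : U.max' h ≤ k) :
    prefixCard (U.erase (U.max' h)) k + 1 = U.card := by
  rw [prefixCard_eq_card ((erase_subset _ _).trans
    ((subset_Icc_max' h hU).trans (Icc_subset_Icc_right hk))), card_erase_add_one (U.max'_mem h)]

lemma prefixCard_erase_max'_of_lt (hU : 0 ∉ U) (hk : k < U.max' h) :
    prefixCard (U.erase (U.max' h)) k = prefixCard U k := by
  rw [prefixCard_erase (U.max'_mem h) (mem_Icc.mp (subset_Icc_max' h hU (U.max'_mem h))).1,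
    if_neg hk.not_ge, add_zero]

end ErasedMax

lemma forall₂_le_iff_countP_le :
    ∀ {L M : List ℕ}, L.Pairwise (· ≤ ·) → M.Pairwise (· ≤ ·) → L.length = M.length →
      (List.Forall₂ (· ≤ ·) L M ↔ ∀ k, M.countP (· ≤ k) ≤ L.countP (· ≤ k))
  | [], [], _, _, _ => by simp
  | a :: L, b :: M, hL, hM, hlen => by
    rw [List.pairwise_cons] at hL hM
    rw [List.forall₂_cons, forall₂_le_iff_countP_le hL.2 hM.2 (by simpa using hlen)]
    have hL0 : ∀ k < a, L.countP (· ≤ k) = 0 := fun k hk =>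
      List.countP_eq_zero.mpr fun x hx => by have := hL.1 x hx; simp; omega
    have hM0 : ∀ k < b, M.countP (· ≤ k) = 0 := fun k hk =>
      List.countP_eq_zero.mpr fun x hx => by have := hM.1 x hx; simp; omega
    simp only [List.countP_cons, decide_eq_true_eq]
    constructor
    · rintro ⟨hab, h⟩ k
      have := h k
      split_ifs <;> omega
    · intro h
      have hab : a ≤ b := by
        by_contra hba
        have := h b
        rw [hL0 b (by omega)] at this
        simp [hba] at this
      refine ⟨hab, fun k => ?_⟩
      have := h k
      by_cases hbk : b ≤ k
      · simp only [hbk, le_trans hab hbk, if_true] at this; omega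
      · rw [hM0 k (by omega)]; omega

lemma countP_sort_le_eq_prefixCard {S : Finset ℕ} (hS : 0 ∉ S) (k : ℕ) :
    (S.sort (· ≤ ·)).countP (· ≤ k) = prefixCard S k := by
  rw [← Multiset.coe_countP, Finset.sort_eq, Multiset.countP_eq_card_filter, ← Finset.filter_val,
    Finset.card_val, prefixCard]
  congr 1
  ext x
  simp only [mem_filter, mem_inter, mem_Icc]
  constructor
  · rintro ⟨hx, hxk⟩
    exact ⟨hx, Nat.one_le_iff_ne_zero.mpr (by rintro rfl; exact hS hx), hxk⟩
  · rintro ⟨hx, -, hxk⟩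
    exact ⟨hx, hxk⟩

lemma galeLe_iff_prefixCard_le {U B : Finset ℕ} (hU : 0 ∉ U) (hB : 0 ∉ B)
    (hcard : U.card = B.card) :
    galeLe U B ↔ ∀ k, prefixCard B k ≤ prefixCard U k := by
  rw [galeLe, forall₂_le_iff_countP_le (pairwise_sort _ _) (pairwise_sort _ _)
    (by simp [hcard])]
  simp only [countP_sort_le_eq_prefixCard hU, countP_sort_le_eq_prefixCard hB]

section Schubert

variable {n : ℕ} {U B : Finset ℕ}

lemma subset_of_mem_schubertBases {r : ℕ} (hB : B ∈ schubertBases n r U) : B ⊆ Icc 1 n :=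
  mem_powerset.mp (mem_filter.mp hB).1

lemma mem_schubertBases_iff (hU : 0 ∉ U) :
    B ∈ schubertBases n U.card U ↔
      B ⊆ Icc 1 n ∧ B.card = U.card ∧ ∀ k, prefixCard B k ≤ prefixCard U k := by
  rw [schubertBases, mem_filter, mem_powerset]
  refine and_congr_right fun hB => and_congr_right fun hcard => ?_
  exact galeLe_iff_prefixCard_le hU (zero_notMem_of_subset_Icc hB) hcard.symm

lemma self_mem_schubertBases (hU : U ⊆ Icc 1 n) : U ∈ schubertBases n U.card U :=
  (mem_schubertBases_iff (zero_notMem_of_subset_Icc hU)).mpr ⟨hU, rfl, fun _ => le_rfl⟩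

lemma one_mem_of_mem_schubertBases (hU : 0 ∉ U) (hB : B ∈ schubertBases n U.card U)
    (h1B : 1 ∈ B) : 1 ∈ U := by
  have := ((mem_schubertBases_iff hU).mp hB).2.2 1
  simp only [prefixCard_one, h1B, if_true] at this
  by_contra h1U
  simp [h1U] at this

lemma mem_of_mem_schubertBases (hU : U ⊆ Icc 1 n) (hnU : n ∈ U)
    (hB : B ∈ schubertBases n U.card U) : n ∈ B := by
  obtain ⟨hBn, hcard, hle⟩ := (mem_schubertBases_iff (zero_notMem_of_subset_Icc hU)).mp hB
  obtain ⟨m, rfl⟩ : ∃ m, n = m + 1 := ⟨n - 1, by have := mem_Icc.mp (hU hnU); omega⟩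
  by_contra hnB
  have := hle m
  rw [prefixCard_eq_card ((subset_Icc_iff_of_notMem hnB).mp hBn), hcard] at this
  exact (prefixCard_lt_card hnU m.lt_succ_self).not_ge this

lemma insert_erase_mem_schubertBases (hU : 0 ∉ U) (hB : B ∈ schubertBases n U.card U)
    {b c : ℕ} (hb : b ∈ B) (hc : c ∉ B) (hbc : b ≤ c) (hcn : c ≤ n) :
    insert c (B.erase b) ∈ schubertBases n U.card U := by
  obtain ⟨hBn, hcard, hle⟩ := (mem_schubertBases_iff hU).mp hB
  have hb1 := (mem_Icc.mp (hBn hb)).1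
  have hcB : c ∉ B.erase b := fun h => hc (mem_of_mem_erase h)
  refine (mem_schubertBases_iff hU).mpr ⟨?_, ?_, fun k => ?_⟩
  · exact insert_subset (mem_Icc.mpr ⟨by omega, hcn⟩) ((erase_subset b B).trans hBn)
  · rw [card_insert_of_notMem hcB, card_erase_of_mem hb, hcard]
    have := card_pos.mpr ⟨b, hb⟩; omega
  · have := hle k
    rw [prefixCard_erase hb hb1] at this
    rw [prefixCard_insert hcB (by omega)]
    split_ifs at this ⊢ <;> omega

end Schubert

/-- The bases of the deletion `M ∖ e` when `e` is not a coloop. -/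
def famDelete (ℬ : Finset (Finset ℕ)) (e : ℕ) : Finset (Finset ℕ) := ℬ.filter (e ∉ ·)

/-- The bases of the contraction `M / e` when `e` is not a loop. -/
def famContract (ℬ : Finset (Finset ℕ)) (e : ℕ) : Finset (Finset ℕ) :=
  (ℬ.filter (e ∈ ·)).image (·.erase e)

section FamRank

variable {ℬ : Finset (Finset ℕ)} {A B : Finset ℕ} {e : ℕ}

lemma card_inter_le_famRank (hB : B ∈ ℬ) : (A ∩ B).card ≤ famRank ℬ A :=
  le_sup (f := fun B => (A ∩ B).card) hB

lemma famRank_le {m : ℕ} (h : ∀ B ∈ ℬ, (A ∩ B).card ≤ m) : famRank ℬ A ≤ m :=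
  Finset.sup_le h

lemma famRank_empty : famRank ℬ ∅ = 0 :=
  Nat.le_zero.mp (famRank_le fun B _ => by simp)

lemma erase_mem_famContract (hB : B ∈ ℬ) (heB : e ∈ B) : B.erase e ∈ famContract ℬ e :=
  mem_image_of_mem _ (mem_filter.mpr ⟨hB, heB⟩ : B ∈ ℬ.filter (e ∈ ·))

lemma card_insert_inter_of_mem (heB : e ∈ B) :
    (insert e A ∩ B).card = (A ∩ B.erase e).card + 1 := by
  rw [← card_insert_of_notMem (a := e) (s := A ∩ B.erase e) (by simp)]
  congr 1
  ext x
  by_cases hx : x = e <;> simp [hx, heB]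

lemma famRank_famDelete (heA : e ∉ A)
    (hex : ∀ B ∈ ℬ, e ∈ B → ∃ B' ∈ famDelete ℬ e, B.erase e ⊆ B') :
    famRank (famDelete ℬ e) A = famRank ℬ A := by
  refine le_antisymm (Finset.sup_mono (filter_subset _ _)) (famRank_le fun B hB => ?_)
  by_cases heB : e ∈ B
  · obtain ⟨B', hB', hsub⟩ := hex B hB heB
    refine le_trans (card_le_card fun x hx => ?_) (card_inter_le_famRank hB')
    rw [mem_inter] at hx ⊢
    exact ⟨hx.1, hsub (mem_erase.mpr ⟨fun h => heA (h ▸ hx.1), hx.2⟩)⟩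
  · exact card_inter_le_famRank (mem_filter.mpr ⟨hB, heB⟩)

lemma famRank_insert_le (hex : ∀ B ∈ ℬ, e ∉ B → ∃ x ∈ B, insert e (B.erase x) ∈ ℬ) :
    famRank ℬ (insert e A) ≤ famRank (famContract ℬ e) A + 1 := by
  refine famRank_le fun B hB => ?_
  by_cases heB : e ∈ B
  · rw [card_insert_inter_of_mem heB]
    exact Nat.add_le_add_right (card_inter_le_famRank (erase_mem_famContract hB heB)) 1
  · obtain ⟨x, -, hB'⟩ := hex B hB heB
    have hle := card_inter_le_famRank (A := A) (erase_mem_famContract hB' (mem_insert_self e _))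
    rw [erase_insert fun h => heB (mem_of_mem_erase h), inter_erase] at hle
    have := pred_card_le_card_erase (s := A ∩ B) (a := x)
    rw [insert_inter_of_notMem heB]
    omega

lemma famRank_famContract_add_one_le (hB : B ∈ ℬ) (heB : e ∈ B) :
    famRank (famContract ℬ e) A + 1 ≤ famRank ℬ (insert e A) := by
  have hrank : ∀ B ∈ ℬ, e ∈ B → (A ∩ B.erase e).card + 1 ≤ famRank ℬ (insert e A) :=
    fun B hB heB => card_insert_inter_of_mem heB ▸ card_inter_le_famRank hB
  have := hrank B hB heB
  have : famRank (famContract ℬ e) A ≤ famRank ℬ (insert e A) - 1 := by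
    refine famRank_le fun B' hB' => ?_
    obtain ⟨B, hB, rfl⟩ := mem_image.mp hB'
    have := hrank B (mem_filter.mp hB).1 (mem_filter.mp hB).2
    omega
  omega

lemma famRank_insert (hℬ : ℬ.Nonempty)
    (hex : ∀ B ∈ ℬ, e ∉ B → ∃ x ∈ B, insert e (B.erase x) ∈ ℬ) :
    famRank ℬ (insert e A) = famRank (famContract ℬ e) A + 1 := by
  refine le_antisymm (famRank_insert_le hex) ?_
  obtain ⟨B, hB⟩ := hℬ
  by_cases heB : e ∈ B
  · exact famRank_famContract_add_one_le hB heB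
  · obtain ⟨x, -, hB'⟩ := hex B hB heB
    exact famRank_famContract_add_one_le hB' (mem_insert_self e _)

lemma famRank_famContract_of_forall_mem (heA : e ∉ A) (hcoloop : ∀ B ∈ ℬ, e ∈ B) :
    famRank (famContract ℬ e) A = famRank ℬ A := by
  rw [famContract, filter_true_of_mem hcoloop, famRank, famRank, sup_image]
  congr 1
  ext B
  simp only [Function.comp_apply, inter_erase,
    erase_eq_of_notMem (fun h => heA (mem_inter.mp h).1)]

end FamRank

section BetaInv

variable {E : Finset ℕ} {ℬ ℬ₁ ℬ₂ : Finset (Finset ℕ)} {e : ℕ}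

lemma betaInv_insert (he : e ∉ E) (hE : E.Nonempty)
    (hcon : ∀ A ⊆ E, famRank ℬ (insert e A) = famRank ℬ₂ A + 1) :
    betaInv (insert e E) ℬ = (-1) ^ famRank ℬ (insert e E) *
      ∑ A ∈ E.powerset, (-1) ^ A.card * ((famRank ℬ A : ℤ) - famRank ℬ₂ A) := by
  rw [betaInv, sum_powerset_insert he, ← sum_add_distrib]
  congr 1
  have hsum : ∑ A ∈ E.powerset, (-1 : ℤ) ^ A.card = 0 :=
    sum_powerset_neg_one_pow_card_of_nonempty hE
  calc _ = ∑ A ∈ E.powerset, ((-1) ^ A.card * ((famRank ℬ A : ℤ) - famRank ℬ₂ A)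
        - (-1) ^ A.card) := sum_congr rfl fun A hA => by
          have heA : e ∉ A := fun h => he (mem_powerset.mp hA h)
          rw [card_insert_of_notMem heA, hcon A (mem_powerset.mp hA)]
          push_cast; ring
    _ = _ := by rw [sum_sub_distrib, hsum, sub_zero]

lemma betaInv_insert_eq_add (he : e ∉ E) (hE : E.Nonempty)
    (hdel : ∀ A ⊆ E, famRank ℬ A = famRank ℬ₁ A)
    (hcon : ∀ A ⊆ E, famRank ℬ (insert e A) = famRank ℬ₂ A + 1)
    (hrk : famRank ℬ (insert e E) = famRank ℬ E) :
    betaInv (insert e E) ℬ = betaInv E ℬ₁ + betaInv E ℬ₂ := by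
  have hrk₁ : famRank ℬ (insert e E) = famRank ℬ₁ E := hrk.trans (hdel E subset_rfl)
  have hrk₂ : famRank ℬ (insert e E) = famRank ℬ₂ E + 1 := hcon E subset_rfl
  have hsum₁ : ∑ A ∈ E.powerset, (-1 : ℤ) ^ A.card * famRank ℬ A
      = ∑ A ∈ E.powerset, (-1 : ℤ) ^ A.card * famRank ℬ₁ A :=
    sum_congr rfl fun A hA => by rw [hdel A (mem_powerset.mp hA)]
  rw [betaInv_insert he hE hcon, betaInv, betaInv, ← hrk₁, hrk₂]
  simp only [mul_sub, sum_sub_distrib, hsum₁]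
  ring

lemma betaInv_insert_eq_zero (he : e ∉ E) (hE : E.Nonempty)
    (hcoloop : ∀ A ⊆ E, famRank ℬ A = famRank ℬ₂ A)
    (hcon : ∀ A ⊆ E, famRank ℬ (insert e A) = famRank ℬ₂ A + 1) :
    betaInv (insert e E) ℬ = 0 := by
  rw [betaInv_insert he hE hcon, sum_eq_zero fun A hA => by
    rw [hcoloop A (mem_powerset.mp hA), sub_self, mul_zero], mul_zero]

lemma betaInv_eq_zero_of_forall_eq_empty (hℬ : ∀ B ∈ ℬ, B = ∅) : betaInv E ℬ = 0 := by
  have hrk : ∀ A, famRank ℬ A = 0 := fun A =>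
    Nat.le_zero.mp (famRank_le fun B hB => by simp [hℬ B hB])
  simp [betaInv, hrk]

end BetaInv

section SchubertMinors

variable {n : ℕ} {U B : Finset ℕ}

lemma famDelete_schubertBases (hU : 0 ∉ U) :
    famDelete (schubertBases (n + 1) U.card U) (n + 1) = schubertBases n U.card U := by
  ext B
  rw [famDelete, mem_filter, mem_schubertBases_iff hU, mem_schubertBases_iff hU]
  constructor
  · rintro ⟨⟨hB, hrest⟩, hnB⟩
    exact ⟨(subset_Icc_iff_of_notMem hnB).mp hB, hrest⟩
  · rintro ⟨hB, hrest⟩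
    have hnB : n + 1 ∉ B := fun h => by simpa using hB h
    exact ⟨⟨(subset_Icc_iff_of_notMem hnB).mpr hB, hrest⟩, hnB⟩

/-- The witness replaces `n + 1` by the largest element of `[n]` missing from `B`. -/
lemma exists_mem_schubertBases_erase_subset (hU : U ⊆ Icc 1 n)
    (hB : B ∈ schubertBases (n + 1) U.card U) (hnB : n + 1 ∈ B) :
    ∃ B' ∈ schubertBases n U.card U, B.erase (n + 1) ⊆ B' := by
  have hU0 := zero_notMem_of_subset_Icc hU
  obtain ⟨hBn, hcard, hle⟩ := (mem_schubertBases_iff hU0).mp hB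
  have hrn : U.card ≤ n := by simpa using card_le_card hU
  have hcard' : (B.erase (n + 1)).card + 1 = U.card := hcard ▸ card_erase_add_one hnB
  have hBn' : B.erase (n + 1) ⊆ Icc 1 n :=
    (subset_Icc_iff_of_notMem (notMem_erase _ _)).mp ((erase_subset _ _).trans hBn)
  have hgap : (Icc 1 n \ B.erase (n + 1)).Nonempty := by
    by_contra hfull
    have := card_le_card (sdiff_eq_empty_iff_subset.mp (not_nonempty_iff_eq_empty.mp hfull))
    simp at this; omega
  set m := (Icc 1 n \ B.erase (n + 1)).max' hgap
  obtain ⟨hm, hmB⟩ := mem_sdiff.mp ((Icc 1 n \ B.erase (n + 1)).max'_mem hgap)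
  rw [mem_Icc] at hm
  have habove : Icc m n ⊆ insert m (B.erase (n + 1)) := fun j hj => by
    rw [mem_Icc] at hj
    rcases hj.1.eq_or_lt with rfl | hmj
    · exact mem_insert_self _ _
    · by_contra hjB
      have := (Icc 1 n \ B.erase (n + 1)).le_max' j
        (mem_sdiff.mpr ⟨mem_Icc.mpr ⟨by omega, hj.2⟩, fun h => hjB (mem_insert_of_mem h)⟩)
      omega
  have hB'n : insert m (B.erase (n + 1)) ⊆ Icc 1 n := insert_subset (mem_Icc.mpr hm) hBn'
  have hB'card : (insert m (B.erase (n + 1))).card = U.card := by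
    rw [card_insert_of_notMem hmB]; omega
  refine ⟨_, (mem_schubertBases_iff hU0).mpr ⟨hB'n, hB'card, fun k => ?_⟩, subset_insert _ _⟩
  by_cases hmk : m ≤ k
  · exact prefixCard_le_prefixCard_of_Ioc_subset hB'n hU hB'card
      ((Ioc_subset_Icc_self.trans (Icc_subset_Icc_left hmk)).trans habove)
  · have := hle k
    rw [prefixCard_erase hnB (by omega), if_neg (by omega), add_zero] at this
    rwa [prefixCard_insert hmB hm.1, if_neg hmk, add_zero]

lemma insert_mem_schubertBases_iff (hU : U ⊆ Icc 1 (n + 1)) (h : U.Nonempty)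
    (hnB : n + 1 ∉ B) :
    insert (n + 1) B ∈ schubertBases (n + 1) U.card U ↔
      B ∈ schubertBases n (U.erase (U.max' h)).card (U.erase (U.max' h)) := by
  have hU0 := zero_notMem_of_subset_Icc hU
  have hu := mem_Icc.mp (hU (U.max'_mem h))
  have hV : U.erase (U.max' h) ⊆ Icc 1 n :=
    (subset_Icc_iff_of_notMem (notMem_erase_max' h hU)).mp ((erase_subset _ _).trans hU)
  have hVcard := card_erase_add_one (U.max'_mem h)
  rw [mem_schubertBases_iff hU0, mem_schubertBases_iff (zero_notMem_of_subset_Icc hV),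
    insert_subset_iff, subset_Icc_iff_of_notMem hnB, card_insert_of_notMem hnB]
  have hcard : B.card + 1 = U.card ↔ B.card = (U.erase (U.max' h)).card := by omega
  -- below `max U` the two conditions agree; from `max U` on both hold by the cardinalities
  have hcnt : B.card = (U.erase (U.max' h)).card → ∀ k,
      (prefixCard (insert (n + 1) B) k ≤ prefixCard U k ↔
        prefixCard B k ≤ prefixCard (U.erase (U.max' h)) k) := by
    intro hBV k
    rw [prefixCard_insert hnB (by omega)]
    by_cases huk : U.max' h ≤ k
    · have := prefixCard_erase_max'_add_one h hU0 huk
      have := prefixCard_of_max'_le h hU0 huk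
      have := prefixCard_le_card (S := B) (k := k)
      split_ifs <;> omega
    · rw [prefixCard_erase_max'_of_lt h hU0 (not_le.mp huk), if_neg (by omega), add_zero]
  constructor
  · rintro ⟨⟨-, h₁⟩, h₂, h₃⟩
    have h₂' := hcard.mp h₂
    exact ⟨h₁, h₂', fun k => (hcnt h₂' k).mp (h₃ k)⟩
  · rintro ⟨h₁, h₂, h₃⟩
    exact ⟨⟨by simp, h₁⟩, hcard.mpr h₂, fun k => (hcnt h₂ k).mpr (h₃ k)⟩

lemma famContract_schubertBases (hU : U ⊆ Icc 1 (n + 1)) (h : U.Nonempty) :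
    famContract (schubertBases (n + 1) U.card U) (n + 1) =
      schubertBases n (U.erase (U.max' h)).card (U.erase (U.max' h)) := by
  ext B
  simp only [famContract, mem_image, mem_filter]
  constructor
  · rintro ⟨B, ⟨hB, hnB⟩, rfl⟩
    rwa [← insert_mem_schubertBases_iff hU h (notMem_erase _ _), insert_erase hnB]
  · intro hB
    have hnB : n + 1 ∉ B := fun hn => by simpa using subset_of_mem_schubertBases hB hn
    exact ⟨insert (n + 1) B, ⟨(insert_mem_schubertBases_iff hU h hnB).mpr hB, mem_insert_self _ _⟩,
      erase_insert hnB⟩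

end SchubertMinors

section SchubertBeta

variable {n : ℕ} {U : Finset ℕ}

lemma famRank_schubertBases_of_subset {A : Finset ℕ} (hUA : U ⊆ A) (hA : A ⊆ Icc 1 n) :
    famRank (schubertBases n U.card U) A = U.card := by
  refine le_antisymm (famRank_le fun B hB => ?_) ?_
  · exact (card_le_card inter_subset_right).trans
      ((mem_schubertBases_iff (zero_notMem_of_subset_Icc (hUA.trans hA))).mp hB).2.1.le
  · simpa [inter_eq_right.mpr hUA] using
      card_inter_le_famRank (A := A) (self_mem_schubertBases (hUA.trans hA))

lemma famRank_insert_schubertBases (hU : U ⊆ Icc 1 (n + 1)) (h : U.Nonempty) (A : Finset ℕ) :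
    famRank (schubertBases (n + 1) U.card U) (insert (n + 1) A) =
      famRank (famContract (schubertBases (n + 1) U.card U) (n + 1)) A + 1 := by
  refine famRank_insert ⟨U, self_mem_schubertBases hU⟩ fun B hB hnB => ?_
  have hB0 : B.Nonempty := card_pos.mp <| by
    rw [((mem_schubertBases_iff (zero_notMem_of_subset_Icc hU)).mp hB).2.1]
    exact card_pos.mpr h
  obtain ⟨b, hb⟩ := hB0
  exact ⟨b, hb, insert_erase_mem_schubertBases (zero_notMem_of_subset_Icc hU) hB hb hnB
    (mem_Icc.mp (subset_of_mem_schubertBases hB hb)).2 le_rfl⟩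

lemma betaInv_schubertBases_succ (hU : U ⊆ Icc 1 n) (h : U.Nonempty) (hn : 1 ≤ n) :
    betaInv (Icc 1 (n + 1)) (schubertBases (n + 1) U.card U) =
      betaInv (Icc 1 n) (schubertBases n U.card U) +
        betaInv (Icc 1 n) (schubertBases n (U.erase (U.max' h)).card (U.erase (U.max' h))) := by
  have hU' := hU.trans (Icc_subset_Icc_right (Nat.le_add_right n 1))
  have hnA : ∀ A ⊆ Icc 1 n, n + 1 ∉ A := fun A hA hn => by simpa using hA hn
  rw [← insert_Icc_right_eq_Icc_add_one (by omega)]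
  refine betaInv_insert_eq_add (hnA _ subset_rfl) (nonempty_Icc.mpr hn) (fun A hA => ?_)
    (fun A _ => by rw [famRank_insert_schubertBases hU' h, famContract_schubertBases hU' h]) ?_
  · rw [← famDelete_schubertBases (n := n) (zero_notMem_of_subset_Icc hU),
      famRank_famDelete (hnA A hA)]
    intro B hB hnB
    rw [famDelete_schubertBases (zero_notMem_of_subset_Icc hU)]
    exact exists_mem_schubertBases_erase_subset hU hB hnB
  · rw [insert_Icc_right_eq_Icc_add_one (by omega), famRank_schubertBases_of_subset hU' le_rfl,
      famRank_schubertBases_of_subset hU (Icc_subset_Icc_right (Nat.le_add_right n 1))]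

lemma betaInv_schubertBases_eq_zero (hU : U ⊆ Icc 1 n) (hnU : n ∈ U) (hn : 2 ≤ n) :
    betaInv (Icc 1 n) (schubertBases n U.card U) = 0 := by
  obtain ⟨n, rfl⟩ : ∃ m, n = m + 1 := ⟨n - 1, by omega⟩
  have hnA : ∀ A ⊆ Icc 1 n, n + 1 ∉ A := fun A hA hn => by simpa using hA hn
  rw [← insert_Icc_right_eq_Icc_add_one (by omega)]
  exact betaInv_insert_eq_zero (hnA _ subset_rfl) (nonempty_Icc.mpr (by omega))
    (fun A hA => (famRank_famContract_of_forall_mem (hnA A hA)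
      fun B hB => mem_of_mem_schubertBases hU hnU hB).symm)
    (fun A _ => famRank_insert_schubertBases hU ⟨_, hnU⟩ A)

end SchubertBeta

def pathEnd (P : List DStep) : ℕ × ℕ := pathPos (1, 1) P P.length

def IsWeaklyBelow (U : Finset ℕ) (P : List DStep) : Prop :=
  ∀ k ≤ P.length, belowPath U (pathPos (1, 1) P k)

def NorthStepsAvoid (U : Finset ℕ) (P : List DStep) : Prop :=
  ∀ (k : ℕ) (h : k < P.length), P[k] = DStep.north →
    ¬ uVertSeg U (pathPos (1, 1) P k).1 (pathPos (1, 1) P k).2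

def diagFreeAdmissible (n r : ℕ) (U : Finset ℕ) : Set (List DStep) :=
  {P | IsAdmissible n r U P ∧ diagCount P = 0}

section Paths

variable {s : ℕ × ℕ} {P Q : List DStep} {t : DStep} {k l : ℕ} {U : Finset ℕ}

lemma pathPos_append_singleton (hk : k ≤ Q.length) : pathPos s (Q ++ [t]) k = pathPos s Q k := by
  rw [pathPos, pathPos, List.take_append_of_le_length hk]

lemma pathEnd_append_singleton :
    pathEnd (Q ++ [t]) = ((pathEnd Q).1 + t.dx, (pathEnd Q).2 + t.dy) := by
  simp [pathEnd, pathPos, add_assoc]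

lemma pathPos_succ (hk : k < P.length) :
    pathPos s P (k + 1) = ((pathPos s P k).1 + P[k].dx, (pathPos s P k).2 + P[k].dy) := by
  simp only [pathPos, List.take_add_one, List.getElem?_eq_getElem hk, Option.toList_some,
    List.map_append, List.sum_append, List.map_cons, List.map_nil, List.sum_cons, List.sum_nil,
    add_zero, add_assoc]

lemma pathPos_snd_mono (hkl : k ≤ l) : (pathPos s P k).2 ≤ (pathPos s P l).2 := by
  simp only [pathPos]
  rw [← Nat.add_sub_cancel' hkl, List.take_add, List.map_append, List.sum_append]
  omega

lemma one_le_pathEnd_fst : 1 ≤ (pathEnd P).1 := Nat.le_add_right 1 _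

lemma one_le_pathEnd_snd : 1 ≤ (pathEnd P).2 := Nat.le_add_right 1 _

lemma length_add_two_le_pathEnd : P.length + 2 ≤ (pathEnd P).1 + (pathEnd P).2 := by
  have key : ∀ L : List DStep, L.length ≤ (L.map DStep.dx).sum + (L.map DStep.dy).sum := by
    intro L
    induction L with
    | nil => simp
    | cons a L ih => cases a <;> simp [DStep.dx, DStep.dy] <;> omega
  have := key P
  simp only [pathEnd, pathPos, List.take_length]
  omega

lemma diagCount_eq_zero_iff : diagCount P = 0 ↔ DStep.diag ∉ P := by
  simp only [diagCount, List.length_eq_zero_iff, List.filter_eq_nil_iff, decide_eq_true_eq]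
  exact ⟨fun h hd => h _ hd rfl, fun h a ha had => h (had ▸ ha)⟩

lemma isWeaklyBelow_append_singleton :
    IsWeaklyBelow U (Q ++ [t]) ↔ IsWeaklyBelow U Q ∧ belowPath U (pathEnd (Q ++ [t])) := by
  simp only [IsWeaklyBelow, List.length_append, List.length_singleton]
  constructor
  · intro h
    exact ⟨fun k hk => pathPos_append_singleton hk ▸ h k (by omega),
      by simpa [pathEnd] using h _ le_rfl⟩
  · rintro ⟨hQ, hend⟩ k hk
    rcases Nat.lt_or_eq_of_le hk with hk | rfl
    · exact pathPos_append_singleton (t := t) (Nat.lt_succ_iff.mp hk) ▸ hQ k (by omega)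
    · simpa [pathEnd] using hend

lemma northStepsAvoid_append_singleton :
    NorthStepsAvoid U (Q ++ [t]) ↔
      NorthStepsAvoid U Q ∧ (t = DStep.north → ¬ uVertSeg U (pathEnd Q).1 (pathEnd Q).2) := by
  simp only [NorthStepsAvoid, List.length_append, List.length_singleton]
  constructor
  · intro h
    refine ⟨fun k hk hN => ?_, fun hN => ?_⟩
    · have := h k (by omega) (by rwa [List.getElem_append_left hk])
      rwa [pathPos_append_singleton hk.le] at this
    · have := h Q.length (by omega) (by simpa using hN)
      rwa [pathPos_append_singleton le_rfl] at this
  · rintro ⟨hQ, hlast⟩ k hk hN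
    rcases Nat.lt_or_eq_of_le (Nat.lt_succ_iff.mp hk) with hk | rfl
    · rw [pathPos_append_singleton hk.le]
      exact hQ k hk (by rwa [List.getElem_append_left hk] at hN)
    · rw [pathPos_append_singleton le_rfl]
      exact hlast (by simpa using hN)

end Paths

section ErasedMaxPaths

variable {U : Finset ℕ} (h : U.Nonempty)

lemma belowPath_erase_max'_iff (hU : 0 ∉ U) {p : ℕ × ℕ} (hp : p.2 < U.card) :
    belowPath (U.erase (U.max' h)) p ↔ belowPath U p := by
  change p.2 ≤ prefixCard _ _ ↔ p.2 ≤ prefixCard _ _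
  by_cases hk : U.max' h ≤ p.1 + p.2
  · have := prefixCard_erase_max'_add_one h hU hk
    rw [prefixCard_of_max'_le h hU hk]
    omega
  · rw [prefixCard_erase_max'_of_lt h hU (not_le.mp hk)]

lemma uVertSeg_erase_max'_iff (hU : 0 ∉ U) {x y : ℕ} (hy : y + 1 < U.card) :
    uVertSeg (U.erase (U.max' h)) x y ↔ uVertSeg U x y := by
  change _ ∧ prefixCard _ _ = _ ↔ _ ∧ prefixCard _ _ = _
  by_cases hk : U.max' h ≤ x + y + 1
  · -- from step `max U` on, `path(U)` is at height `|U|` and takes no further north step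
    have := prefixCard_erase_max'_add_one h hU hk
    rw [prefixCard_of_max'_le h hU hk]
    constructor
    · rintro ⟨hmem, -⟩
      exact absurd (le_antisymm (U.le_max' _ (mem_of_mem_erase hmem)) hk) (ne_of_mem_erase hmem)
    · rintro ⟨-, heq⟩
      omega
  · rw [prefixCard_erase_max'_of_lt h hU (not_le.mp hk), mem_erase]
    exact and_congr_left fun _ => and_iff_right fun he => hk he.ge

lemma isWeaklyBelow_erase_max'_iff (hU : 0 ∉ U) {P : List DStep} (hP : (pathEnd P).2 < U.card) :
    IsWeaklyBelow (U.erase (U.max' h)) P ↔ IsWeaklyBelow U P :=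
  forall₂_congr fun _ hk => belowPath_erase_max'_iff h hU ((pathPos_snd_mono hk).trans_lt hP)

lemma northStepsAvoid_erase_max'_iff (hU : 0 ∉ U) {P : List DStep}
    (hP : (pathEnd P).2 < U.card) :
    NorthStepsAvoid (U.erase (U.max' h)) P ↔ NorthStepsAvoid U P := by
  refine forall₂_congr fun k hk => imp_congr_right fun hN => not_congr
    (uVertSeg_erase_max'_iff h hU ?_)
  have := pathPos_snd_mono (s := (1, 1)) (P := P) (Nat.succ_le_of_lt hk)
  rw [pathPos_succ hk, hN] at this
  exact this.trans_lt hP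

end ErasedMaxPaths

section Admissible

variable {n r : ℕ} {U : Finset ℕ} {P Q : List DStep} {t : DStep}

/-- When `n ∉ U` the exception for a final north step in `IsAdmissible` is void: that step would
traverse the vertical segment of step number `n`, which is not a north step of `path(U)`. -/
lemma mem_diagFreeAdmissible_iff (hnU : n ∉ U) :
    P ∈ diagFreeAdmissible n r U ↔
      pathEnd P = (n - r, r) ∧ IsWeaklyBelow U P ∧ NorthStepsAvoid U P ∧ DStep.diag ∉ P := by
  simp only [diagFreeAdmissible, Set.mem_ofPred_eq, diagCount_eq_zero_iff, IsAdmissible,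
    IsDelannoy, List.get_eq_getElem]
  constructor
  · rintro ⟨⟨⟨hend, hbelow⟩, hsteps⟩, hdiag⟩
    refine ⟨hend, hbelow, fun k hk hN hseg => ?_, hdiag⟩
    rcases (hsteps k hk).1 hN with hfin | hnot
    · rw [pathPos_succ hk, hN] at hfin
      simp only [DStep.dx, DStep.dy, Prod.ext_iff] at hfin
      have : 1 ≤ (pathPos (1, 1) P k).1 := Nat.le_add_right 1 _
      exact hnU (by convert hseg.1 using 1; omega)
    · exact hnot hseg
  · rintro ⟨hend, hbelow, havoid, hdiag⟩
    exact ⟨⟨⟨hend, hbelow⟩, fun k hk => ⟨fun hN => Or.inr (havoid k hk hN),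
      fun hD => absurd (hD ▸ List.getElem_mem hk) hdiag⟩⟩, hdiag⟩

lemma append_mem_diagFreeAdmissible_iff (hU : U ⊆ Icc 1 n) (ht : t ≠ DStep.diag) :
    Q ++ [t] ∈ diagFreeAdmissible (n + 1) U.card U ↔
      pathEnd (Q ++ [t]) = (n + 1 - U.card, U.card) ∧ IsWeaklyBelow U Q ∧
        NorthStepsAvoid U Q ∧ DStep.diag ∉ Q := by
  have hnU : n + 1 ∉ U := fun h => by simpa using hU h
  have hrn : U.card ≤ n := by simpa using card_le_card hU
  rw [mem_diagFreeAdmissible_iff hnU, isWeaklyBelow_append_singleton,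
    northStepsAvoid_append_singleton, List.mem_append, List.mem_singleton]
  constructor
  · rintro ⟨hend, ⟨hbelow, -⟩, ⟨havoid, -⟩, hdiag⟩
    exact ⟨hend, hbelow, havoid, fun h => hdiag (Or.inl h)⟩
  · rintro ⟨hend, hbelow, havoid, hdiag⟩
    refine ⟨hend, ⟨hbelow, ?_⟩, ⟨havoid, fun htN hseg => hnU ?_⟩, ?_⟩
    · rw [hend, belowPath, Nat.sub_add_cancel (by omega),
        inter_eq_left.mpr (hU.trans (Icc_subset_Icc_right (by omega)))]
    · rw [pathEnd_append_singleton, htN] at hend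
      simp only [DStep.dx, DStep.dy, Prod.ext_iff] at hend
      convert hseg.1 using 1
      omega
    · rintro (h | h)
      exacts [hdiag h, ht h.symm]

lemma append_east_mem_diagFreeAdmissible_iff (hU : U ⊆ Icc 1 n) (hnU : n ∉ U) :
    Q ++ [DStep.east] ∈ diagFreeAdmissible (n + 1) U.card U ↔
      Q ∈ diagFreeAdmissible n U.card U := by
  rw [append_mem_diagFreeAdmissible_iff hU (by decide), mem_diagFreeAdmissible_iff hnU,
    pathEnd_append_singleton]
  have := one_le_pathEnd_fst (P := Q)
  simp only [DStep.dx, DStep.dy, Prod.ext_iff, add_zero]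
  constructor
  · rintro ⟨⟨h₁, h₂⟩, hrest⟩; exact ⟨⟨by omega, h₂⟩, hrest⟩
  · rintro ⟨⟨h₁, h₂⟩, hrest⟩; exact ⟨⟨by omega, h₂⟩, hrest⟩

/-- The path `Q` would end at `(n - r, r)`, where `r = |U|`; since the `r`-th north step of
`path(U)` is its step `n`, the last step of `Q` is either east from a point above `path(U)` or
north along that step of `path(U)`. -/
lemma append_east_notMem_diagFreeAdmissible (hU : U ⊆ Icc 1 n) (h1U : 1 ∈ U) (hnU : n ∈ U)
    (hn : 2 ≤ n) : Q ++ [DStep.east] ∉ diagFreeAdmissible (n + 1) U.card U := by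
  rw [append_mem_diagFreeAdmissible_iff hU (by decide), pathEnd_append_singleton]
  rintro ⟨hend, hbelow, havoid, hdiag⟩
  simp only [DStep.dx, DStep.dy, Prod.ext_iff, add_zero] at hend
  have hr : 2 ≤ U.card := by
    simpa [card_pair (show 1 ≠ n by omega)] using card_le_card (insert_subset h1U
      (singleton_subset_iff.mpr hnU))
  have hUn := prefixCard_eq_card hU
  rcases List.eq_nil_or_concat' Q with rfl | ⟨Q, t, rfl⟩
  · simp [pathEnd, pathPos] at hend; omega
  rw [pathEnd_append_singleton] at hend
  have := one_le_pathEnd_fst (P := Q)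
  cases t with
  | east =>
    simp only [DStep.dx, DStep.dy, add_zero] at hend
    have hbelow' : (pathEnd Q).2 ≤ prefixCard U ((pathEnd Q).1 + (pathEnd Q).2) :=
      (isWeaklyBelow_append_singleton.mp hbelow).1 Q.length le_rfl
    rw [show (pathEnd Q).1 + (pathEnd Q).2 = n - 1 by omega] at hbelow'
    have := prefixCard_lt_card hnU (k := n - 1) (by omega)
    omega
  | north =>
    simp only [DStep.dx, DStep.dy, add_zero] at hend
    have hw : (pathEnd Q).1 + (pathEnd Q).2 + 1 = n := by omega
    refine (northStepsAvoid_append_singleton.mp havoid).2 rfl ?_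
    rw [uVertSeg, hw]
    exact ⟨hnU, by change prefixCard U n = _; omega⟩
  | diag => exact hdiag (List.mem_append_right _ (List.mem_singleton_self _))

lemma append_north_mem_diagFreeAdmissible_iff (hU : U ⊆ Icc 1 n) (h : U.Nonempty) :
    Q ++ [DStep.north] ∈ diagFreeAdmissible (n + 1) U.card U ↔
      Q ∈ diagFreeAdmissible n (U.erase (U.max' h)).card (U.erase (U.max' h)) := by
  have hU0 := zero_notMem_of_subset_Icc hU
  have hcard := card_erase_add_one (U.max'_mem h)
  rw [append_mem_diagFreeAdmissible_iff hU (by decide),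
    mem_diagFreeAdmissible_iff (notMem_erase_max' h hU), pathEnd_append_singleton]
  have := one_le_pathEnd_fst (P := Q)
  simp only [DStep.dx, DStep.dy, Prod.ext_iff, add_zero]
  constructor
  · rintro ⟨⟨h₁, h₂⟩, hbelow, havoid, hdiag⟩
    have hP : (pathEnd Q).2 < U.card := by omega
    exact ⟨⟨by omega, by omega⟩, (isWeaklyBelow_erase_max'_iff h hU0 hP).mpr hbelow,
      (northStepsAvoid_erase_max'_iff h hU0 hP).mpr havoid, hdiag⟩
  · rintro ⟨⟨h₁, h₂⟩, hbelow, havoid, hdiag⟩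
    have hP : (pathEnd Q).2 < U.card := by omega
    exact ⟨⟨by omega, by omega⟩, (isWeaklyBelow_erase_max'_iff h hU0 hP).mp hbelow,
      (northStepsAvoid_erase_max'_iff h hU0 hP).mp havoid, hdiag⟩

end Admissible

instance : Fintype DStep where
  elems := {DStep.east, DStep.north, DStep.diag}
  complete x := by cases x <;> simp

section Counting

variable {n r : ℕ} {U : Finset ℕ}

lemma finite_diagFreeAdmissible : (diagFreeAdmissible n r U).Finite := by
  refine (List.finite_length_le DStep n).subset fun P hP => ?_
  have hend : pathEnd P = (n - r, r) := hP.1.1.1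
  have := length_add_two_le_pathEnd (P := P)
  have := one_le_pathEnd_fst (P := P)
  rw [hend] at *
  simp only [Set.mem_ofPred_eq]
  omega

lemma diagFreeAdmissible_zero : diagFreeAdmissible n 0 U = ∅ :=
  Set.eq_empty_of_forall_notMem fun P hP => by
    have := congrArg Prod.snd hP.1.1.1
    have := one_le_pathEnd_snd (P := P)
    simp_all [pathEnd]

lemma ncard_eq_ncard_append_east_add_ncard_append_north {S : Set (List DStep)} (hS : S.Finite)
    (hne : ∀ P ∈ S, P ≠ [] ∧ DStep.diag ∉ P) :
    S.ncard = {Q | Q ++ [DStep.east] ∈ S}.ncard + {Q | Q ++ [DStep.north] ∈ S}.ncard := by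
  have hinj : ∀ t : DStep, Function.Injective (· ++ [t]) := fun _ _ _ => List.append_cancel_right
  have hsplit : S = (· ++ [DStep.east]) '' {Q | Q ++ [DStep.east] ∈ S} ∪
      (· ++ [DStep.north]) '' {Q | Q ++ [DStep.north] ∈ S} := by
    ext P
    refine ⟨fun hP => ?_, ?_⟩
    · obtain ⟨hP0, hdiag⟩ := hne P hP
      obtain ⟨Q, t, rfl⟩ := (List.eq_nil_or_concat' P).resolve_left hP0
      cases t with
      | east => exact Or.inl ⟨Q, hP, rfl⟩
      | north => exact Or.inr ⟨Q, hP, rfl⟩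
      | diag => exact absurd (List.mem_append_right _ (List.mem_singleton_self _)) hdiag
    · rintro (⟨Q, hQ, rfl⟩ | ⟨Q, hQ, rfl⟩) <;> exact hQ
  have hdisj : Disjoint ((· ++ [DStep.east]) '' {Q | Q ++ [DStep.east] ∈ S})
      ((· ++ [DStep.north]) '' {Q | Q ++ [DStep.north] ∈ S}) := by
    rw [Set.disjoint_left]
    rintro _ ⟨Q₁, -, rfl⟩ ⟨Q₂, -, h⟩
    simpa using congrArg List.getLast? h
  conv_lhs => rw [hsplit]
  rw [Set.ncard_union_eq hdisj (hS.subset (Set.image_subset_iff.mpr fun _ h => h))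
    (hS.subset (Set.image_subset_iff.mpr fun _ h => h)), Set.ncard_image_of_injective _ (hinj _),
    Set.ncard_image_of_injective _ (hinj _)]

end Counting

lemma ncard_diagFreeAdmissible_succ {n : ℕ} {U : Finset ℕ} (hU : U ⊆ Icc 1 n) (h1U : 1 ∈ U)
    (hn : 2 ≤ n) :
    (diagFreeAdmissible (n + 1) U.card U).ncard =
      (if n ∈ U then 0 else (diagFreeAdmissible n U.card U).ncard) +
        (diagFreeAdmissible n (U.erase (U.max' ⟨1, h1U⟩)).card
          (U.erase (U.max' ⟨1, h1U⟩))).ncard := by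
  have hnU : n + 1 ∉ U := fun h => by simpa using hU h
  rw [ncard_eq_ncard_append_east_add_ncard_append_north finite_diagFreeAdmissible fun P hP => by
    obtain ⟨hend, -, -, hdiag⟩ := (mem_diagFreeAdmissible_iff hnU).mp hP
    refine ⟨?_, hdiag⟩
    rintro rfl
    simp only [pathEnd, pathPos, List.take_nil, List.map_nil, List.sum_nil, Prod.ext_iff] at hend
    omega]
  congr 1
  · split_ifs with hnU'
    · have hempty : {Q | Q ++ [DStep.east] ∈ diagFreeAdmissible (n + 1) U.card U} = ∅ :=
        Set.eq_empty_of_forall_notMem fun _ => append_east_notMem_diagFreeAdmissible hU h1U hnU' hn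
      rw [hempty, Set.ncard_empty]
    · exact congrArg Set.ncard (Set.ext fun Q => append_east_mem_diagFreeAdmissible_iff hU hnU')
  · exact congrArg Set.ncard (Set.ext fun Q => append_north_mem_diagFreeAdmissible_iff hU _)

lemma betaInv_schubertBases_empty {n : ℕ} :
    betaInv (Icc 1 n) (schubertBases n (∅ : Finset ℕ).card ∅) = 0 :=
  betaInv_eq_zero_of_forall_eq_empty fun _ hB =>
    card_eq_zero.mp ((mem_schubertBases_iff (notMem_empty 0)).mp hB).2.1

lemma betaInv_schubertBases_one :
    betaInv (Icc 1 1) (schubertBases 1 ({1} : Finset ℕ).card {1}) = 1 := by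
  have hrk : famRank (schubertBases 1 1 {1}) {1} = 1 :=
    famRank_schubertBases_of_subset (n := 1) (U := {1}) le_rfl (by simp)
  rw [betaInv, Icc_self, show ({1} : Finset ℕ).powerset = {∅, {1}} by decide,
    sum_pair (by decide)]
  simp [hrk, famRank_empty]

lemma diagFreeAdmissible_two : diagFreeAdmissible 2 ({1} : Finset ℕ).card {1} = {[]} := by
  ext P
  rw [mem_diagFreeAdmissible_iff (by simp), Set.mem_singleton_iff]
  constructor
  · rintro ⟨hend, -⟩
    have := length_add_two_le_pathEnd (P := P)
    rw [hend, card_singleton] at this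
    exact List.eq_nil_of_length_eq_zero (by omega)
  · rintro rfl
    refine ⟨by simp [pathEnd, pathPos], fun k hk => ?_, fun k hk => absurd hk (by simp), by simp⟩
    obtain rfl : k = 0 := by simpa using hk
    simp [belowPath, pathPos]

theorem betaInv_eq_ncard_diagFreeAdmissible {n : ℕ} (hn : 2 ≤ n) {U : Finset ℕ}
    (hU : U ⊆ Icc 1 n) (h1U : 1 ∈ U) (hnU : n ∉ U) :
    betaInv (Icc 1 n) (schubertBases n U.card U) = (diagFreeAdmissible n U.card U).ncard := by
  induction n, hn using Nat.le_induction generalizing U with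
  | base =>
    obtain rfl : U = {1} := eq_singleton_iff_unique_mem.mpr ⟨h1U, fun x hx => by
      have := mem_Icc.mp (hU hx); have : x ≠ 2 := fun h => hnU (h ▸ hx)
      omega⟩
    have hsplit := betaInv_schubertBases_succ (n := 1) (U := {1}) (by simp) (by simp) le_rfl
    simp only [max'_singleton, erase_singleton] at hsplit
    rw [hsplit, betaInv_schubertBases_one, betaInv_schubertBases_empty, diagFreeAdmissible_two]
    simp
  | succ n hn IH =>
    replace hU := (subset_Icc_iff_of_notMem hnU).mp hU
    rw [betaInv_schubertBases_succ hU ⟨1, h1U⟩ (by omega), ncard_diagFreeAdmissible_succ hU h1U hn,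
      Nat.cast_add]
    congr 1
    · split_ifs with hnU'
      · rw [betaInv_schubertBases_eq_zero hU hnU' hn, Nat.cast_zero]
      · exact IH hU h1U hnU'
    · rcases (U.erase (U.max' ⟨1, h1U⟩)).eq_empty_or_nonempty with hV | ⟨x, hx⟩
      · rw [hV, betaInv_schubertBases_empty, card_empty, diagFreeAdmissible_zero, Set.ncard_empty,
          Nat.cast_zero]
      · obtain ⟨hxu, hxU⟩ := mem_erase.mp hx
        have := U.le_max' x hxU
        have := (mem_Icc.mp (hU hxU)).1
        exact IH ((erase_subset _ _).trans hU) (mem_erase.mpr ⟨by omega, h1U⟩)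
          (notMem_erase_max' _ hU)

/-- For a loopless and coloopless Schubert matroid `SM(U)` on `[n]`
of rank `r`, with `n ≥ 2`, the β-invariant equals the number of admissible Delannoy
paths associated to `SM(U)` having no diagonal steps. -/
theorem statement6 (n r : ℕ) (hn : 2 ≤ n) (U : Finset ℕ) (hUsub : U ⊆ Finset.Icc 1 n)
    (hUcard : U.card = r)
    (hloopless : ∀ e ∈ Finset.Icc 1 n, ∃ B ∈ schubertBases n r U, e ∈ B)
    (hcoloopless : ∀ e ∈ Finset.Icc 1 n, ∃ B ∈ schubertBases n r U, e ∉ B) :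
    betaInv (Finset.Icc 1 n) (schubertBases n r U)
      = ({P : List DStep | IsAdmissible n r U P ∧ diagCount P = 0}.ncard : ℤ) := by
  subst hUcard
  obtain ⟨B₁, hB₁, h1B₁⟩ := hloopless 1 (mem_Icc.mpr ⟨le_rfl, by omega⟩)
  obtain ⟨Bₙ, hBₙ, hnBₙ⟩ := hcoloopless n (mem_Icc.mpr ⟨by omega, le_rfl⟩)
  have h1U : 1 ∈ U := one_mem_of_mem_schubertBases (zero_notMem_of_subset_Icc hUsub) hB₁ h1B₁
  have hnU : n ∉ U := fun hnU => hnBₙ (mem_of_mem_schubertBases hUsub hnU hBₙ)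
  exact betaInv_eq_ncard_diagFreeAdmissible hn hUsub h1U hnU

end GPoly
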